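/- In the bivariate log-linear setup, let p₁' ∈ Δ^{d₁−1}, let r*(p₁') = (ρ*, (1−ρ*)·p₂*) ∈ Δ^{d₂} with ρ* ∈ [0,1] and p₂* ∈ Δ^{d₂−1}, set q* := Φ_{p₁'}(r*(p₁')), r₀ := (1, 0, …, 0) ∈ Δ^{d₂}, and r^t := t·r₀ + (1−t)·r*(p₁') for t ∈ [0,1]. Let c_max := max_{1≤i≤n} (‖A_{i,1}‖₂ + ‖A_{i,2}‖₂). Then for every t ∈ [0,1], ‖∇²_{r,p₁} F(r^t, p₁')‖ ≤ F̄(q*) · exp(c_max·(1−ρ*)) · ‖(𝟏 + α_fix + α_comp) ⊙ α_fix‖, where 𝟏 ∈ ℝ^n is the all-ones vector, ⊙ the componentwise product, the left norm is the operator norm and the right norm the Euclidean norm on ℝ^n (Lemma bounding the mixed Hessian along the Add segment). -/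

import Mathlib

/-!
With `w_i(p) = (⟨A_{i,1}, p⟩, A_{i,2})` (`collapsedRow`), one has `⟨A_i, Φ_p(r)⟩ = ⟨w_i(p), r⟩`, so
`∇_r F(r, p) = (1/n) Σ_i e^{⟨w_i(p), r⟩} w_i(p)`. Since `w_i` is affine in `p` with linear part
`v ↦ ⟨A_{i,1}, v⟩ r₀` of norm `‖A_{i,1}‖`, the product rule bounds the mixed Hessian by
`(1/n) Σ_i e^{⟨w_i, r⟩} ‖A_{i,1}‖ (1 + ‖r‖ ‖w_i‖)`. Along the segment `‖r^t‖ ≤ 1` and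
`‖w_i‖ ≤ ‖A_{i,1}‖ + ‖A_{i,2}‖`, while moving from `r*` towards `r₀` raises the exponent by
`t (1 - ρ*) (⟨A_{i,1}, p₁'⟩ - ⟨A_{i,2}, p₂*⟩) ≤ c_max (1 - ρ*)`.
-/

noncomputable section
open scoped RealInnerProductSpace BigOperators

/-- Euclidean space `ℝ^m`. -/
abbrev Euc (m : ℕ) := EuclideanSpace ℝ (Fin m)

/-- Build a vector of `ℝ^m` from its coordinates. -/
def vecOf {m : ℕ} (f : Fin m → ℝ) : Euc m := (WithLp.equiv 2 _).symm f

/-- The probability simplex in `ℝ^m`. -/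
def probSimplex (m : ℕ) : Set (Euc m) := {p | (∀ i, 0 ≤ p i) ∧ ∑ i, p i = 1}

/-- A point of the collapsed space `ℝ^{1+d₂}` from `(ρ, b₂)`; coordinate `0` is `ρ`. -/
def pairR {d₂ : ℕ} (ρ : ℝ) (b₂ : Fin d₂ → ℝ) : Euc (d₂ + 1) := vecOf (Fin.cons ρ b₂)

/-- The collapsed simplex `Δ^{d₂} = {(ρ, b₂) : ρ ≥ 0, b₂ ≥ 0, ρ + Σ_j (b₂)_j = 1}`. -/
def collapsedSimplex (d₂ : ℕ) : Set (Euc (d₂ + 1)) := probSimplex (d₂ + 1)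

/-- A point of the full space `ℝ^{d₁+d₂}` from its two blocks of coordinates. -/
def pairQ {d₁ d₂ : ℕ} (x : Fin d₁ → ℝ) (y : Fin d₂ → ℝ) : Euc (d₁ + d₂) :=
  vecOf (Fin.append x y)

/-- The expansion map `Φ_{p₁}(ρ, b₂) = (ρ·p₁, b₂)`. -/
def Phi {d₁ d₂ : ℕ} (p₁ : Euc d₁) (r : Euc (d₂ + 1)) : Euc (d₁ + d₂) :=
  pairQ (fun j => r 0 * p₁ j) (fun j => r j.succ)

variable {n d₁ d₂ : ℕ}

/-- `⟨A_i, q⟩` where `A_i = (A_{i,1}, A_{i,2})`. -/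
def innerA (A₁ : Fin n → Euc d₁) (A₂ : Fin n → Euc d₂) (i : Fin n) (q : Euc (d₁ + d₂)) : ℝ :=
  ⟪pairQ (A₁ i) (A₂ i), q⟫

/-- `F̄(q) = (1/n)·Σ_i exp(⟨A_i, q⟩)`. -/
def Fbar (A₁ : Fin n → Euc d₁) (A₂ : Fin n → Euc d₂) (q : Euc (d₁ + d₂)) : ℝ :=
  (1 / (n : ℝ)) * ∑ i, Real.exp (innerA A₁ A₂ i q)

/-- `F(q) = (1/n)·Σ_i (c_i + exp(⟨A_i, q⟩))`. -/
def Ffull (c : Fin n → ℝ) (A₁ : Fin n → Euc d₁) (A₂ : Fin n → Euc d₂)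
    (q : Euc (d₁ + d₂)) : ℝ :=
  (1 / (n : ℝ)) * ∑ i, (c i + Real.exp (innerA A₁ A₂ i q))

/-- The bivariate objective `F(r, p₁) := F(Φ_{p₁}(r))`. -/
def Fb (c : Fin n → ℝ) (A₁ : Fin n → Euc d₁) (A₂ : Fin n → Euc d₂)
    (r : Euc (d₂ + 1)) (p₁ : Euc d₁) : ℝ :=
  Ffull c A₁ A₂ (Phi p₁ r)

open Real

section MixedHessian

variable {ι E P : Type*} [Fintype ι]
  [NormedAddCommGroup E] [InnerProductSpace ℝ E]
  [NormedAddCommGroup P] [NormedSpace ℝ P]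

theorem gradient_mul_sum_exp_inner [CompleteSpace E] (a : ℝ) (c : ι → ℝ) (w : ι → E) (r : E) :
    gradient (fun r => a * ∑ i, (c i + exp ⟪w i, r⟫)) r = a • ∑ i, exp ⟪w i, r⟫ • w i := by
  refine HasGradientAt.gradient (hasGradientAt_iff_hasFDerivAt.2 ?_)
  have hterm : ∀ i, HasFDerivAt (fun r => c i + exp ⟪w i, r⟫)
      (exp ⟪w i, r⟫ • innerSL ℝ (w i)) r :=
    fun i => ((innerSL ℝ (w i)).hasFDerivAt.exp).const_add (c i)
  refine ((HasFDerivAt.fun_sum fun i _ => hterm i).const_mul a).congr_fderiv ?_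
  ext v
  simp [Finset.mul_sum]

theorem hasFDerivAt_exp_inner_smul {w : P → E} {w' : P →L[ℝ] E} {p₀ : P}
    (hw : HasFDerivAt w w' p₀) (r : E) :
    HasFDerivAt (fun p => exp ⟪w p, r⟫ • w p)
      (exp ⟪w p₀, r⟫ • w' + (exp ⟪w p₀, r⟫ • (innerSL ℝ r).comp w').smulRight (w p₀)) p₀ := by
  have hinner : HasFDerivAt (fun p => ⟪w p, r⟫) ((innerSL ℝ r).comp w') p₀ :=
    ((innerSL ℝ r).hasFDerivAt.comp p₀ hw).congr_of_eventuallyEq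
      (.of_forall fun p => real_inner_comm r (w p))
  exact hinner.exp.smul hw

theorem norm_exp_inner_smul_deriv_le (x : ℝ) (w' : P →L[ℝ] E) (r u : E) :
    ‖exp x • w' + (exp x • (innerSL ℝ r).comp w').smulRight u‖
      ≤ exp x * (‖w'‖ * (1 + ‖r‖ * ‖u‖)) := by
  have hcomp : ‖(innerSL ℝ r).comp w'‖ ≤ ‖r‖ * ‖w'‖ :=
    ((innerSL ℝ r).opNorm_comp_le w').trans_eq (by rw [innerSL_apply_norm])
  calc _ ≤ ‖exp x • w'‖ + ‖exp x • (innerSL ℝ r).comp w'‖ * ‖u‖ := by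
        grw [norm_add_le, ContinuousLinearMap.norm_smulRight_apply]
    _ ≤ exp x * ‖w'‖ + exp x * (‖r‖ * ‖w'‖) * ‖u‖ := by
        rw [norm_smul, norm_smul, norm_of_nonneg (exp_pos x).le]
        gcongr
    _ = _ := by ring

theorem norm_fderiv_gradient_mul_sum_exp_inner_le [CompleteSpace E] (a : ℝ) (c : ι → ℝ)
    {w : ι → P → E} {w' : ι → P →L[ℝ] E} {p₀ : P} (hw : ∀ i, HasFDerivAt (w i) (w' i) p₀) (r : E) :
    ‖fderiv ℝ (fun p => gradient (fun r => a * ∑ i, (c i + exp ⟪w i p, r⟫)) r) p₀‖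
      ≤ |a| * ∑ i, exp ⟪w i p₀, r⟫ * (‖w' i‖ * (1 + ‖r‖ * ‖w i p₀‖)) := by
  simp only [gradient_mul_sum_exp_inner]
  have hderiv : HasFDerivAt (fun p => a • ∑ i, exp ⟪w i p, r⟫ • w i p) _ p₀ :=
    (HasFDerivAt.fun_sum fun i _ => hasFDerivAt_exp_inner_smul (hw i) r).const_smul a
  rw [hderiv.fderiv, norm_smul, norm_eq_abs]
  gcongr
  exact (norm_sum_le _ _).trans (Finset.sum_le_sum fun i _ => norm_exp_inner_smul_deriv_le _ _ _ _)

end MixedHessian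

theorem norm_smul_add_one_sub_smul_le_one {E : Type*} [NormedAddCommGroup E] [NormedSpace ℝ E]
    {x y : E} (hx : ‖x‖ ≤ 1) (hy : ‖y‖ ≤ 1) {t : ℝ} (ht : t ∈ Set.Icc (0 : ℝ) 1) :
    ‖t • x + (1 - t) • y‖ ≤ 1 := by
  simpa using (convex_closedBall (0 : E) 1) (by simpa using hx) (by simpa using hy) ht.1
    (sub_nonneg.2 ht.2) (add_sub_cancel t 1)

theorem norm_le_one_of_mem_probSimplex {m : ℕ} {p : Euc m} (hp : p ∈ probSimplex m) :
    ‖p‖ ≤ 1 := by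
  obtain ⟨hp0, hp1⟩ := hp
  have hle : ∀ i, p i ≤ 1 := fun i =>
    hp1 ▸ Finset.single_le_sum (fun j _ => hp0 j) (Finset.mem_univ i)
  rw [EuclideanSpace.norm_eq, Real.sqrt_le_one]
  calc ∑ i, ‖p i‖ ^ 2 ≤ ∑ i, p i := Finset.sum_le_sum fun i _ => by
        rw [norm_of_nonneg (hp0 i), sq]
        exact mul_le_of_le_one_left (hp0 i) (hle i)
    _ = 1 := hp1

theorem le_norm_vecOf {m : ℕ} (f : Fin m → ℝ) (i : Fin m) : f i ≤ ‖vecOf f‖ :=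
  (le_abs_self _).trans (PiLp.norm_apply_le (vecOf f) i)

theorem inner_pairR {d : ℕ} (a a' : ℝ) (b b' : Fin d → ℝ) :
    ⟪pairR a b, pairR a' b'⟫ = a * a' + ⟪vecOf b, vecOf b'⟫ := by
  simp only [PiLp.inner_apply, Fin.sum_univ_succ]
  simp [pairR, vecOf, mul_comm]

theorem pairR_eta {d : ℕ} (r : Euc (d + 1)) : pairR (r 0) (fun j => r j.succ) = r := by
  ext j
  cases j using Fin.cases <;> rfl

theorem pairR_eq_add_smul {d : ℕ} (a : ℝ) (b : Fin d → ℝ) :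
    pairR a b = pairR 0 b + a • pairR 1 (fun _ => 0) := by
  ext j
  cases j using Fin.cases <;> simp [pairR, vecOf]

theorem norm_pairR_one_zero {d : ℕ} : ‖pairR 1 (fun _ => 0 : Fin d → ℝ)‖ = 1 := by
  simp [EuclideanSpace.norm_eq, Fin.sum_univ_succ, pairR, vecOf]

theorem norm_pairR_zero {d : ℕ} (b : Fin d → ℝ) : ‖pairR 0 b‖ = ‖vecOf b‖ := by
  simp [EuclideanSpace.norm_eq, Fin.sum_univ_succ, pairR, vecOf]

theorem inner_pairQ (x u : Fin d₁ → ℝ) (y v : Fin d₂ → ℝ) :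
    ⟪pairQ x y, pairQ u v⟫ = ⟪vecOf x, vecOf u⟫ + ⟪vecOf y, vecOf v⟫ := by
  simp only [PiLp.inner_apply, Fin.sum_univ_add]
  simp [pairQ, vecOf]

section CollapsedRow

variable (A₁ : Fin n → Euc d₁) (A₂ : Fin n → Euc d₂)

def collapsedRow (i : Fin n) (p : Euc d₁) : Euc (d₂ + 1) := pairR ⟪A₁ i, p⟫ (A₂ i)

theorem innerA_Phi (i : Fin n) (p : Euc d₁) (r : Euc (d₂ + 1)) :
    innerA A₁ A₂ i (Phi p r) = ⟪collapsedRow A₁ A₂ i p, r⟫ := by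
  rw [← pairR_eta r, innerA, Phi, inner_pairQ, collapsedRow, inner_pairR]
  change ⟪A₁ i, r 0 • p⟫ + _ = _
  rw [real_inner_smul_right, mul_comm]
  rfl

theorem Fb_eq_mul_sum_exp_inner_collapsedRow (c : Fin n → ℝ) (r : Euc (d₂ + 1)) (p : Euc d₁) :
    Fb c A₁ A₂ r p = 1 / (n : ℝ) * ∑ i, (c i + exp ⟪collapsedRow A₁ A₂ i p, r⟫) := by
  simp only [Fb, Ffull, innerA_Phi]

theorem hasFDerivAt_collapsedRow (i : Fin n) (p : Euc d₁) :
    HasFDerivAt (collapsedRow A₁ A₂ i)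
      ((innerSL ℝ (A₁ i)).smulRight (pairR 1 fun _ => 0)) p := by
  have hrow : collapsedRow A₁ A₂ i = fun p => pairR 0 (A₂ i) + innerSL ℝ (A₁ i) p • pairR 1 0 :=
    funext fun p => pairR_eq_add_smul _ _
  rw [hrow]
  exact ((innerSL ℝ (A₁ i)).hasFDerivAt.smul_const _).const_add _

theorem norm_collapsedRow_le (i : Fin n) {p : Euc d₁} (hp : ‖p‖ ≤ 1) :
    ‖collapsedRow A₁ A₂ i p‖ ≤ ‖A₁ i‖ + ‖A₂ i‖ := by
  rw [collapsedRow, pairR_eq_add_smul]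
  calc _ ≤ ‖A₂ i‖ + |⟪A₁ i, p⟫| := by
        grw [norm_add_le, norm_pairR_zero, norm_smul, norm_pairR_one_zero, norm_eq_abs, mul_one]
        rfl
    _ ≤ ‖A₂ i‖ + ‖A₁ i‖ * ‖p‖ := by grw [abs_real_inner_le_norm]
    _ ≤ ‖A₁ i‖ + ‖A₂ i‖ := by grw [hp]; linarith

theorem norm_collapsedRow_deriv_mul_le (i : Fin n) {p : Euc d₁} (hp : ‖p‖ ≤ 1)
    {r : Euc (d₂ + 1)} (hr : ‖r‖ ≤ 1) :
    ‖(innerSL ℝ (A₁ i)).smulRight (pairR 1 fun _ => 0 : Euc (d₂ + 1))‖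
      * (1 + ‖r‖ * ‖collapsedRow A₁ A₂ i p‖) ≤ (1 + ‖A₁ i‖ + ‖A₂ i‖) * ‖A₁ i‖ := by
  rw [ContinuousLinearMap.norm_smulRight_apply, innerSL_apply_norm, norm_pairR_one_zero]
  grw [hr, norm_collapsedRow_le A₁ A₂ i hp]
  exact le_of_eq (by ring)

theorem inner_collapsedRow_pairR (i : Fin n) (p : Euc d₁) (a : ℝ) (b : Fin d₂ → ℝ) :
    ⟪collapsedRow A₁ A₂ i p, pairR a b⟫ = ⟪A₁ i, p⟫ * a + ⟪A₂ i, vecOf b⟫ :=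
  inner_pairR _ _ _ _

theorem inner_collapsedRow_segment_le (i : Fin n) {p₁ : Euc d₁} (hp₁ : ‖p₁‖ ≤ 1)
    {p₂ : Euc d₂} (hp₂ : ‖p₂‖ ≤ 1) {ρ t : ℝ} (hρ : ρ ≤ 1) (ht : t ∈ Set.Icc (0 : ℝ) 1) :
    ⟪collapsedRow A₁ A₂ i p₁,
        t • pairR 1 (fun _ => 0) + (1 - t) • pairR ρ (fun j => (1 - ρ) * p₂ j)⟫
      ≤ ⟪collapsedRow A₁ A₂ i p₁, pairR ρ (fun j => (1 - ρ) * p₂ j)⟫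
          + (‖A₁ i‖ + ‖A₂ i‖) * (1 - ρ) := by
  obtain ⟨ht0, ht1⟩ := ht
  have hvec : vecOf (fun j => (1 - ρ) * p₂ j) = (1 - ρ) • p₂ := rfl
  have hzero : vecOf (fun _ : Fin d₂ => (0 : ℝ)) = 0 := rfl
  simp only [inner_add_right, real_inner_smul_right, inner_collapsedRow_pairR, hvec, hzero,
    inner_zero_right, add_zero, mul_one]
  have ha : |⟪A₁ i, p₁⟫| ≤ ‖A₁ i‖ :=
    (abs_real_inner_le_norm _ _).trans (mul_le_of_le_one_right (norm_nonneg _) hp₁)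
  have hb : |⟪A₂ i, p₂⟫| ≤ ‖A₂ i‖ :=
    (abs_real_inner_le_norm _ _).trans (mul_le_of_le_one_right (norm_nonneg _) hp₂)
  have hab : ⟪A₁ i, p₁⟫ - ⟪A₂ i, p₂⟫ ≤ ‖A₁ i‖ + ‖A₂ i‖ := by
    linarith [le_abs_self ⟪A₁ i, p₁⟫, neg_abs_le ⟪A₂ i, p₂⟫]
  have hnorm : 0 ≤ ‖A₁ i‖ + ‖A₂ i‖ := by positivity
  -- the segment moves the exponent by `t (1 - ρ) (⟪A₁ i, p₁⟫ - ⟪A₂ i, p₂⟫)`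
  nlinarith [mul_le_mul_of_nonneg_left hab (mul_nonneg ht0 (sub_nonneg.2 hρ)),
    mul_nonneg (mul_nonneg (sub_nonneg.2 ht1) (sub_nonneg.2 hρ)) hnorm]

end CollapsedRow

theorem mixed_hessian_bound_add_segment_general
    {n d₁ d₂ : ℕ}
    (c : Fin n → ℝ)
    (A₁ : Fin n → Euc d₁) (A₂ : Fin n → Euc d₂)
    {p₁' : Euc d₁} (hp₁' : p₁' ∈ probSimplex d₁)
    {ρstar : ℝ} (hρ : ρstar ∈ Set.Icc (0 : ℝ) 1)
    {p₂star : Euc d₂} (hp₂star : p₂star ∈ probSimplex d₂)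
    (hrstarΔ : pairR ρstar (fun j => (1 - ρstar) * p₂star j) ∈ collapsedSimplex d₂) :
    ∀ t ∈ Set.Icc (0 : ℝ) 1,
      ‖fderiv ℝ (fun p => gradient (fun r => Fb c A₁ A₂ r p)
            (t • pairR 1 (fun _ => 0) +
              (1 - t) • pairR ρstar (fun j => (1 - ρstar) * p₂star j))) p₁'‖ ≤
        Fbar A₁ A₂ (Phi p₁' (pairR ρstar (fun j => (1 - ρstar) * p₂star j))) *
          Real.exp ((⨆ i, (‖A₁ i‖ + ‖A₂ i‖)) * (1 - ρstar)) *
            ‖vecOf (fun i => (1 + ‖A₁ i‖ + ‖A₂ i‖) * ‖A₁ i‖)‖ := by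
  intro t ht
  set rstar := pairR ρstar (fun j => (1 - ρstar) * p₂star j)
  set rt := t • pairR 1 (fun _ => 0) + (1 - t) • rstar
  set cmax := ⨆ i, (‖A₁ i‖ + ‖A₂ i‖)
  set K := ‖vecOf (fun i => (1 + ‖A₁ i‖ + ‖A₂ i‖) * ‖A₁ i‖)‖
  have hp₁ := norm_le_one_of_mem_probSimplex hp₁'
  have hrt : ‖rt‖ ≤ 1 := norm_smul_add_one_sub_smul_le_one norm_pairR_one_zero.le
    (norm_le_one_of_mem_probSimplex hrstarΔ) ht
  have hcmax (i : Fin n) : ‖A₁ i‖ + ‖A₂ i‖ ≤ cmax :=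
    le_ciSup (f := fun i => ‖A₁ i‖ + ‖A₂ i‖) (Set.finite_range _).bddAbove i
  have hK (i : Fin n) : (1 + ‖A₁ i‖ + ‖A₂ i‖) * ‖A₁ i‖ ≤ K :=
    le_norm_vecOf (fun i => (1 + ‖A₁ i‖ + ‖A₂ i‖) * ‖A₁ i‖) i
  simp only [Fb_eq_mul_sum_exp_inner_collapsedRow]
  calc _ ≤ |1 / (n : ℝ)| * ∑ i, exp ⟪collapsedRow A₁ A₂ i p₁', rt⟫
          * (‖(innerSL ℝ (A₁ i)).smulRight (pairR 1 fun _ => 0 : Euc (d₂ + 1))‖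
            * (1 + ‖rt‖ * ‖collapsedRow A₁ A₂ i p₁'‖)) :=
        norm_fderiv_gradient_mul_sum_exp_inner_le _ c (hasFDerivAt_collapsedRow A₁ A₂ · p₁') rt
    _ ≤ 1 / (n : ℝ) * ∑ i, exp (⟪collapsedRow A₁ A₂ i p₁', rstar⟫ + cmax * (1 - ρstar)) * K := by
        rw [abs_of_nonneg (by positivity)]
        gcongr with i
        · grw [inner_collapsedRow_segment_le A₁ A₂ i hp₁ (norm_le_one_of_mem_probSimplex hp₂star)
            hρ.2 ht, hcmax i]
          exact sub_nonneg.2 hρ.2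
        · exact (norm_collapsedRow_deriv_mul_le A₁ A₂ i hp₁ hrt).trans (hK i)
    _ = _ := by
        simp only [Fbar, innerA_Phi, exp_add, Finset.mul_sum, Finset.sum_mul]
        exact Finset.sum_congr rfl fun i _ => by ring

/-- **Lemma (bounding the mixed Hessian along the Add segment).**
Let `p₁' ∈ Δ^{d₁−1}`, `r*(p₁') = (ρ*, (1−ρ*)·p₂*) ∈ Δ^{d₂}` with `ρ* ∈ [0,1]` and
`p₂* ∈ Δ^{d₂−1}`, `q* = Φ_{p₁'}(r*(p₁'))`, `r₀ = (1, 0, …, 0)`, and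
`r^t = t·r₀ + (1−t)·r*(p₁')`.  With `c_max = max_i (‖A_{i,1}‖ + ‖A_{i,2}‖)`, for every
`t ∈ [0,1]`,
`‖∇²_{r,p₁} F(r^t, p₁')‖ ≤ F̄(q*)·exp(c_max·(1−ρ*))·‖(𝟏 + α_fix + α_comp) ⊙ α_fix‖`. -/
theorem mixed_hessian_bound_add_segment
    {n d₁ d₂ : ℕ} (hn : 0 < n) (hd₁ : 0 < d₁) (hd₂ : 0 < d₂)
    (c : Fin n → ℝ) (hc : ∀ i, 0 < c i)
    (A₁ : Fin n → Euc d₁) (A₂ : Fin n → Euc d₂)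
    {p₁' : Euc d₁} (hp₁' : p₁' ∈ probSimplex d₁)
    {ρstar : ℝ} (hρ : ρstar ∈ Set.Icc (0 : ℝ) 1)
    {p₂star : Euc d₂} (hp₂star : p₂star ∈ probSimplex d₂)
    (hrstarΔ : pairR ρstar (fun j => (1 - ρstar) * p₂star j) ∈ collapsedSimplex d₂) :
    ∀ t ∈ Set.Icc (0 : ℝ) 1,
      ‖fderiv ℝ (fun p => gradient (fun r => Fb c A₁ A₂ r p)
            (t • pairR 1 (fun _ => 0) +
              (1 - t) • pairR ρstar (fun j => (1 - ρstar) * p₂star j))) p₁'‖ ≤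
        Fbar A₁ A₂ (Phi p₁' (pairR ρstar (fun j => (1 - ρstar) * p₂star j))) *
          Real.exp ((⨆ i, (‖A₁ i‖ + ‖A₂ i‖)) * (1 - ρstar)) *
            ‖vecOf (fun i => (1 + ‖A₁ i‖ + ‖A₂ i‖) * ‖A₁ i‖)‖ :=
  mixed_hessian_bound_add_segment_general c A₁ A₂ hp₁' hρ hp₂star hrstarΔ

end
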